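/- For pairwise distinct variable indices n₁, …, n_k, predicates π₁, …, π_m and a type τ, the recursively defined set of ground instances satisfies the closed form gr(∀n₁. ⋯ ∀n_k. π₁ ⇒ ⋯ ⇒ π_m ⇒ τ) = { S τ | S a substitution with S nᵢ ground for each 1 ≤ i ≤ k and S m = var m for every m ∉ {n₁, …, n_k}, such that ∅ ⊩_A S πⱼ for every 1 ≤ j ≤ m }. -/

import Mathlib

/-- Types: variables, constants, and function types. -/
inductive Ty : Type
  | var : ℕ → Ty
  | const : ℕ → Ty
  | arrow : Ty → Ty → Ty
  deriving DecidableEq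

/-- A type is ground if it contains no variables. -/
def Ty.Ground : Ty → Prop
  | .var _ => False
  | .const _ => True
  | .arrow t u => t.Ground ∧ u.Ground

/-- Homomorphic extension of a substitution `S : ℕ → Ty` to types. -/
def Ty.subst (S : ℕ → Ty) : Ty → Ty
  | .var n => S n
  | .const k => .const k
  | .arrow t u => .arrow (t.subst S) (u.subst S)

/-- A substitution is ground if it maps every variable to a ground type. -/
def GroundSubst (S : ℕ → Ty) : Prop := ∀ n, (S n).Ground

/-- A predicate `C τ⃗`: a class name applied to a list of types. -/
structure OPred : Type where
  cls : ℕ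
  args : List Ty
  deriving DecidableEq

/-- Substitutions act on predicates argumentwise. -/
def OPred.subst (S : ℕ → Ty) (p : OPred) : OPred := ⟨p.cls, p.args.map (Ty.subst S)⟩

/-- An instance axiom `Q ⇒ π₀` with context `Q` and head `π₀`. -/
structure Axm : Type where
  ctx : List OPred
  head : OPred

/-- The entailment relation `P ⊩_A π`. -/
inductive Entails (A : Set Axm) : Set OPred → OPred → Prop
  | assume {P : Set OPred} {π : OPred} : π ∈ P → Entails A P π
  | axm {P : Set OPred} {ax : Axm} {S : ℕ → Ty} {π : OPred} :
      ax ∈ A → ax.head.subst S = π →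
      (∀ q ∈ ax.ctx, Entails A P (q.subst S)) →
      Entails A P π

/-- Qualified types `ρ ::= τ | π ⇒ ρ`. -/
inductive QualTy : Type
  | base : Ty → QualTy
  | qual : OPred → QualTy → QualTy

/-- Type schemes `σ ::= ρ | ∀n. σ`. -/
inductive Scheme : Type
  | rho : QualTy → Scheme
  | all : ℕ → Scheme → Scheme

/-- The single-point substitution `[τ₀/n]`. -/
def pointSubst (n : ℕ) (τ₀ : Ty) : ℕ → Ty := fun m => if m = n then τ₀ else .var m

/-- `[τ₀/n]ρ` on qualified types. -/
def QualTy.substVar (n : ℕ) (τ₀ : Ty) : QualTy → QualTy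
  | .base τ => .base (τ.subst (pointSubst n τ₀))
  | .qual π ρ => .qual (π.subst (pointSubst n τ₀)) (ρ.substVar n τ₀)

/-- `[τ₀/n]σ` on type schemes: replace `var n` by `τ₀` throughout. -/
def Scheme.substVar (n : ℕ) (τ₀ : Ty) : Scheme → Scheme
  | .rho ρ => .rho (ρ.substVar n τ₀)
  | .all m σ => .all m (σ.substVar n τ₀)

open Classical in
/-- The ground instances of a qualified type: `gr(τ) = {τ}`; `gr(π ⇒ ρ)` is `gr(ρ)`
if `∅ ⊩_A π` and `∅` otherwise. -/
noncomputable def grQ (A : Set Axm) : QualTy → Set Ty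
  | .base τ => {τ}
  | .qual π ρ => if Entails A ∅ π then grQ A ρ else ∅

def Scheme.size : Scheme → ℕ
  | .rho _ => 0
  | .all _ σ => σ.size + 1

theorem Scheme.size_substVar (n : ℕ) (τ₀ : Ty) (σ : Scheme) :
    (σ.substVar n τ₀).size = σ.size := by
  induction σ with
  | rho _ => rfl
  | all m σ ih => simp [Scheme.substVar, Scheme.size, ih]

/-- The ground instances of a type scheme:
`gr(∀n. σ) = ⋃ (τ₀ ground), gr([τ₀/n]σ)`. -/
noncomputable def grS (A : Set Axm) : Scheme → Set Ty
  | .rho ρ => grQ A ρ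
  | .all n σ => ⋃ τ₀ ∈ { τ : Ty | τ.Ground }, grS A (σ.substVar n τ₀)
  termination_by σ => σ.size
  decreasing_by simp [Scheme.size_substVar, Scheme.size]


/-!
Unfolding `gr` along the quantifier prefix `∀n₁. ⋯ ∀n_k.` chooses one ground type for each
`nᵢ` in turn; since the `nᵢ` are distinct, the successive point substitutions `[τᵢ/nᵢ]`
compose to a single substitution that is ground on the `nᵢ` and the identity elsewhere, and
every such substitution arises this way, from its value at `n₁` and the substitution that
agrees with it except for fixing `n₁`.
What is left is a qualified type, whose ground instances are its body provided all its
predicates are entailed.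
-/

open Function

lemma Ty.subst_var (t : Ty) : t.subst Ty.var = t := by
  induction t with
  | var n => rfl
  | const k => rfl
  | arrow a b iha ihb => simp only [Ty.subst, iha, ihb]

lemma Ty.subst_subst (S₁ S₂ : ℕ → Ty) (t : Ty) :
    (t.subst S₁).subst S₂ = t.subst fun m => (S₁ m).subst S₂ := by
  induction t with
  | var n => rfl
  | const k => rfl
  | arrow a b iha ihb => simp only [Ty.subst, iha, ihb]

lemma Ty.subst_of_ground {t : Ty} (h : t.Ground) (S : ℕ → Ty) : t.subst S = t := by
  induction t with
  | var n => exact h.elim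
  | const k => rfl
  | arrow a b iha ihb => simp only [Ty.subst, iha h.1, ihb h.2]

lemma OPred.subst_var (p : OPred) : p.subst Ty.var = p := by
  simp [OPred.subst, show Ty.subst Ty.var = id from funext Ty.subst_var]

lemma OPred.subst_subst (S₁ S₂ : ℕ → Ty) (p : OPred) :
    (p.subst S₁).subst S₂ = p.subst fun m => (S₁ m).subst S₂ := by
  simp [OPred.subst, Function.comp_def, Ty.subst_subst]

lemma pointSubst_then_subst {τ₀ : Ty} (hτ₀ : τ₀.Ground) (n : ℕ) (S : ℕ → Ty) :
    (fun m => (pointSubst n τ₀ m).subst S) = update S n τ₀ := by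
  funext m
  rcases eq_or_ne m n with rfl | hmn
  · simp [pointSubst, Ty.subst_of_ground hτ₀]
  · simp [pointSubst, hmn, Ty.subst]

def QualTy.subst (S : ℕ → Ty) : QualTy → QualTy
  | .base τ => .base (τ.subst S)
  | .qual π ρ => .qual (π.subst S) (ρ.subst S)

lemma QualTy.subst_var (ρ : QualTy) : ρ.subst Ty.var = ρ := by
  induction ρ with
  | base τ => simp only [QualTy.subst, Ty.subst_var]
  | qual π ρ ih => simp only [QualTy.subst, OPred.subst_var, ih]

lemma QualTy.subst_subst (S₁ S₂ : ℕ → Ty) (ρ : QualTy) :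
    (ρ.subst S₁).subst S₂ = ρ.subst fun m => (S₁ m).subst S₂ := by
  induction ρ with
  | base τ => simp only [QualTy.subst, Ty.subst_subst]
  | qual π ρ ih => simp only [QualTy.subst, OPred.subst_subst, ih]

lemma QualTy.substVar_eq_subst (n : ℕ) (τ₀ : Ty) (ρ : QualTy) :
    ρ.substVar n τ₀ = ρ.subst (pointSubst n τ₀) := by
  induction ρ with
  | base τ => rfl
  | qual π ρ ih => simp only [QualTy.substVar, QualTy.subst, ih]

lemma QualTy.subst_foldr_qual (S : ℕ → Ty) (πs : List OPred) (τ : Ty) :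
    (πs.foldr QualTy.qual (QualTy.base τ)).subst S =
      (πs.map (OPred.subst S)).foldr QualTy.qual (QualTy.base (τ.subst S)) := by
  induction πs with
  | nil => rfl
  | cons π πs ih => simp only [List.foldr_cons, List.map_cons, QualTy.subst, ih]

lemma Scheme.substVar_foldr_all (n : ℕ) (τ₀ : Ty) (ns : List ℕ) (ρ : QualTy) :
    (ns.foldr Scheme.all (Scheme.rho ρ)).substVar n τ₀ =
      ns.foldr Scheme.all (Scheme.rho (ρ.subst (pointSubst n τ₀))) := by
  induction ns with
  | nil => simp only [List.foldr_nil, Scheme.substVar, QualTy.substVar_eq_subst]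
  | cons m ns ih => simp only [List.foldr_cons, Scheme.substVar, ih]

lemma mem_grQ_foldr_qual {A : Set Axm} {πs : List OPred} {τ υ : Ty} :
    υ ∈ grQ A (πs.foldr QualTy.qual (QualTy.base τ)) ↔
      (∀ π ∈ πs, Entails A ∅ π) ∧ υ = τ := by
  induction πs with
  | nil => simp [grQ]
  | cons π πs ih =>
    by_cases h : Entails A ∅ π
    · simp [grQ, h, ih]
    · simp [grQ, h]

def IsGroundingFor (ns : List ℕ) (S : ℕ → Ty) : Prop :=
  (∀ n ∈ ns, (S n).Ground) ∧ ∀ m, m ∉ ns → S m = Ty.var m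

lemma isGroundingFor_nil_iff {S : ℕ → Ty} : IsGroundingFor [] S ↔ S = Ty.var := by
  simp [IsGroundingFor, funext_iff]

lemma exists_isGroundingFor_cons_iff {n : ℕ} {ns : List ℕ} (hn : n ∉ ns)
    (P : (ℕ → Ty) → Prop) :
    (∃ S, IsGroundingFor (n :: ns) S ∧ P S) ↔
      ∃ τ₀ : Ty, τ₀.Ground ∧ ∃ S', IsGroundingFor ns S' ∧ P (update S' n τ₀) := by
  constructor
  · rintro ⟨S, ⟨hground, hid⟩, hP⟩
    refine ⟨S n, hground n List.mem_cons_self, update S n (Ty.var n), ⟨?_, ?_⟩, ?_⟩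
    · intro m hm
      rw [update_of_ne (ne_of_mem_of_not_mem hm hn)]
      exact hground m (List.mem_cons_of_mem n hm)
    · intro m hm
      rcases eq_or_ne m n with rfl | hmn
      · exact update_self ..
      · rw [update_of_ne hmn]
        exact hid m (by simp [hmn, hm])
    · rwa [update_idem, update_eq_self]
  · rintro ⟨τ₀, hτ₀, S', ⟨hground, hid⟩, hP⟩
    refine ⟨update S' n τ₀, ⟨?_, ?_⟩, hP⟩
    · intro m hm
      rcases List.mem_cons.mp hm with rfl | hm
      · rwa [update_self]
      · rw [update_of_ne (ne_of_mem_of_not_mem hm hn)]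
        exact hground m hm
    · intro m hm
      rw [List.mem_cons, not_or] at hm
      rw [update_of_ne hm.1]
      exact hid m hm.2

theorem mem_grS_foldr_all_iff {A : Set Axm} {ns : List ℕ} (hns : ns.Nodup) (ρ : QualTy)
    (υ : Ty) :
    υ ∈ grS A (ns.foldr Scheme.all (Scheme.rho ρ)) ↔
      ∃ S, IsGroundingFor ns S ∧ υ ∈ grQ A (ρ.subst S) := by
  induction ns generalizing ρ with
  | nil => simp [grS, isGroundingFor_nil_iff, QualTy.subst_var]
  | cons n ns ih =>
    rw [List.nodup_cons] at hns
    rw [exists_isGroundingFor_cons_iff hns.1, List.foldr_cons, grS]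
    simp only [Set.mem_iUnion, Set.mem_ofPred_eq, exists_prop]
    refine exists_congr fun τ₀ => and_congr_right fun hτ₀ => ?_
    rw [Scheme.substVar_foldr_all, ih hns.2]
    simp only [QualTy.subst_subst, pointSubst_then_subst hτ₀]

/-- Closed form for the ground instances of a type scheme
`∀n₁. ⋯ ∀n_k. π₁ ⇒ ⋯ ⇒ π_m ⇒ τ` with pairwise distinct bound variables `nᵢ`:
they are the images `S τ` under substitutions `S` that are ground on the `nᵢ`,
the identity elsewhere, and satisfy `∅ ⊩_A S πⱼ` for every `j`. -/
theorem grS_closed_form (A : Set Axm) (ns : List ℕ) (hns : ns.Nodup)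
    (πs : List OPred) (τ : Ty) :
    grS A (ns.foldr Scheme.all (Scheme.rho (πs.foldr QualTy.qual (QualTy.base τ)))) =
    { υ : Ty | ∃ S : ℕ → Ty,
        (∀ n ∈ ns, (S n).Ground) ∧
        (∀ m, m ∉ ns → S m = Ty.var m) ∧
        (∀ π ∈ πs, Entails A ∅ (π.subst S)) ∧
        υ = τ.subst S } := by
  ext υ
  rw [mem_grS_foldr_all_iff hns]
  simp only [QualTy.subst_foldr_qual, mem_grQ_foldr_qual, List.forall_mem_map,
    IsGroundingFor, Set.mem_ofPred_eq, and_assoc]
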